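/- Let k ≥ 2 be an integer and let P' = P'_{8·3^k} be the presented group ⟨x, y, z ∣ x² = (xy)², (xy)² = y², z x z^{-1} = y, z y z^{-1} = x y, z^{3^k} = 1⟩. Then P' is a finite group of cardinality 8·3^k, and the set of conjugacy classes of P' has cardinality 7·3^{k-1}. -/

import Mathlib

/-- The relations of the presented group
`P'_{8·3^k} = ⟨x, y, z ∣ x² = (xy)², (xy)² = y², z x z⁻¹ = y, z y z⁻¹ = x y, z^{3^k} = 1⟩`,
where `x` is the first generator, `y` the second and `z` the third one. -/
def Prels (k : ℕ) : Set (FreeGroup (Fin 3)) :=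
  {FreeGroup.of 0 ^ 2 * ((FreeGroup.of 0 * FreeGroup.of 1) ^ 2)⁻¹,
   (FreeGroup.of 0 * FreeGroup.of 1) ^ 2 * (FreeGroup.of 1 ^ 2)⁻¹,
   FreeGroup.of 2 * FreeGroup.of 0 * (FreeGroup.of 2)⁻¹ * (FreeGroup.of 1)⁻¹,
   FreeGroup.of 2 * FreeGroup.of 1 * (FreeGroup.of 2)⁻¹ *
     (FreeGroup.of 0 * FreeGroup.of 1)⁻¹,
   FreeGroup.of 2 ^ (3 ^ k)}

/-- The presented group `P'_{8·3^k}`. -/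
abbrev PGroup (k : ℕ) : Type := PresentedGroup (Prels k)

/-- The generator `x` of `P'_{8·3^k}`. -/
noncomputable def Px (k : ℕ) : PGroup k := PresentedGroup.of 0

/-- The generator `y` of `P'_{8·3^k}`. -/
noncomputable def Py (k : ℕ) : PGroup k := PresentedGroup.of 1

/-- The generator `z` of `P'_{8·3^k}`. -/
noncomputable def Pz (k : ℕ) : PGroup k := PresentedGroup.of 2

/-! ### The model group `Md m = Q8 ⋊ ZMod (3*m)` -/

open QuaternionGroup

abbrev Q8 := QuaternionGroup 2

/-- The order 3 automorphism of `Q8` cycling `x → y → xy → x`. -/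
def th : Q8 → Q8
  | .a 0 => .a 0 | .a 1 => .xa 0 | .a 2 => .a 2 | .a 3 => .xa 2
  | .xa 0 => .xa 3 | .xa 1 => .a 3 | .xa 2 => .xa 1 | .xa 3 => .a 1

/-- The action of `ZMod 3` on `Q8` by powers of `th`. -/
def act (s : ZMod 3) (q : Q8) : Q8 :=
  if s = 0 then q else if s = 1 then th q else th (th q)

lemma act_mul : ∀ (s : ZMod 3) (p q : Q8), act s (p * q) = act s p * act s q := by decide
lemma act_add : ∀ (s t : ZMod 3) (q : Q8), act (s + t) q = act s (act t q) := by decide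
lemma act_zero (q : Q8) : act 0 q = q := rfl
lemma act_one_el : ∀ (s : ZMod 3), act s 1 = 1 := by decide

/-- The model group, as a type: `Q8 × ZMod (3*m)`. -/
def Md (m : ℕ) := Q8 × ZMod (3 * m)

namespace Md
variable {m : ℕ}

/-- Reduction mod 3. -/
def r : ZMod (3 * m) →+* ZMod 3 := ZMod.castHom (Dvd.intro m rfl) _

instance : Mul (Md m) := ⟨fun p q => (p.1 * act (r p.2) q.1, p.2 + q.2)⟩
instance : One (Md m) := ⟨((1 : Q8), 0)⟩
instance : Inv (Md m) := ⟨fun p => (act (-(r p.2)) p.1⁻¹, -p.2)⟩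

lemma mul_def (p q : Md m) : p * q = (p.1 * act (r p.2) q.1, p.2 + q.2) := rfl
lemma one_def : (1 : Md m) = ((1 : Q8), 0) := rfl
lemma inv_def (p : Md m) : p⁻¹ = (act (-(r p.2)) p.1⁻¹, -p.2) := rfl

instance : Group (Md m) :=
  Group.ofLeftAxioms
    (fun p q u => by
      show ((p.1 * act (r p.2) q.1) * act (r (p.2 + q.2)) u.1, (p.2 + q.2) + u.2) =
        (p.1 * act (r p.2) (q.1 * act (r q.2) u.1), p.2 + (q.2 + u.2))
      rw [map_add, Prod.mk.injEq]
      constructor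
      · rw [act_mul, mul_assoc, ← act_add]
      · ring)
    (fun p => by
      show ((1 : Q8) * act (r (0 : ZMod (3 * m))) p.1, (0 : ZMod (3 * m)) + p.2) = p
      exact Prod.ext (by simp only [map_zero, act_zero, one_mul]) (zero_add _))
    (fun p => by
      show (act (-(r p.2)) p.1⁻¹ * act (r (-p.2)) p.1, -p.2 + p.2) =
        ((1 : Q8), (0 : ZMod (3 * m)))
      rw [map_neg, Prod.mk.injEq]
      exact ⟨by rw [← act_mul, inv_mul_cancel, act_one_el], neg_add_cancel _⟩)

lemma card_Md (hm : m ≠ 0) : Nat.card (Md m) = 8 * (3 * m) := by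
  have : NeZero (3 * m) := ⟨by omega⟩
  have h : Nat.card (Md m) = Nat.card Q8 * Nat.card (ZMod (3 * m)) := Nat.card_prod _ _
  rw [h, Nat.card_eq_fintype_card, Nat.card_eq_fintype_card, QuaternionGroup.card, ZMod.card]

/-- The embedding of `Q8`. -/
def iota : Q8 →* Md m where
  toFun q := (q, 0)
  map_one' := rfl
  map_mul' p q := by
    show (p * q, (0 : ZMod (3 * m))) = (p * act (r (0 : ZMod (3 * m))) q, (0 : ZMod (3 * m)) + 0)
    rw [map_zero, act_zero, add_zero]

lemma iota_apply (q : Q8) : (iota q : Md m) = (q, 0) := rfl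

/-- The distinguished element of order `3*m`. -/
def zeta : Md m := (1, 1)

lemma zeta_pow : ∀ n : ℕ, (zeta : Md m) ^ n = (1, (n : ZMod (3 * m)))
  | 0 => by rw [pow_zero, Nat.cast_zero]; rfl
  | n + 1 => by
    rw [pow_succ, zeta_pow n]
    show ((1 : Q8) * act (r (n : ZMod (3 * m))) 1, (n : ZMod (3 * m)) + 1) =
      ((1 : Q8), ((n + 1 : ℕ) : ZMod (3 * m)))
    simp only [zeta, act_one_el, mul_one, Nat.cast_add, Nat.cast_one]

lemma zeta_mul_iota (q : Q8) : (zeta : Md m) * iota q = (act 1 q, 1) := by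
  show ((1 : Q8) * act (r (1 : ZMod (3 * m))) q, (1 : ZMod (3 * m)) + 0) = (act 1 q, 1)
  simp only [map_one, one_mul, add_zero]

lemma zeta_inv : (zeta : Md m)⁻¹ = (1, -1) := by
  rw [inv_def]
  simp only [zeta, map_one, inv_one, act_one_el]
  rfl

lemma zeta_conj (q : Q8) : (zeta : Md m) * iota q * zeta⁻¹ = iota (act 1 q) := by
  show ((1 : Q8) * act (r (1 : ZMod (3 * m))) q * act (r ((1 : ZMod (3 * m)) + 0))
      (act (-(r (1 : ZMod (3 * m)))) (1 : Q8)⁻¹), ((1 : ZMod (3 * m)) + 0) + -1) =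
    ((act 1 q, 0) : Q8 × ZMod (3 * m))
  simp only [map_one, one_mul, add_zero, inv_one, act_one_el, mul_one, add_neg_cancel]

end Md

/-! ### Labels for the conjugacy classes of `Md m` -/

/-- An invariant labelling the twisted conjugacy classes of `Q8`. -/
def label (s : ZMod 3) (q : Q8) : Fin 3 :=
  if s = 0 then
    match q with
    | .a 0 => 0 | .a 1 => 2 | .a 2 => 1 | .a 3 => 2 | .xa _ => 2
  else if s = 1 then
    match q with
    | .a 0 => 0 | .a 1 => 1 | .a 2 => 1 | .a 3 => 0
    | .xa 0 => 1 | .xa 1 => 0 | .xa 2 => 0 | .xa 3 => 1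
  else
    match q with
    | .a 0 => 0 | .a 1 => 0 | .a 2 => 1 | .a 3 => 1
    | .xa 0 => 0 | .xa 1 => 1 | .xa 2 => 1 | .xa 3 => 0

lemma L1 : ∀ (s u : ZMod 3) (p q : Q8),
    label s (p * act u q * act s p⁻¹) = label s q := by decide
lemma L2 : ∀ (s : ZMod 3) (q q' : Q8), label s q = label s q' →
    ∃ (p : Q8) (u : ZMod 3), q' = p * act u q * act s p⁻¹ := by decide
lemma L3 : ∀ (s : ZMod 3) (q : Q8), label s q = 2 → s = 0 := by decide
lemma L4 : ∀ (s : ZMod 3) (l : Fin 3), (l ≠ 2 ∨ s = 0) → ∃ q, label s q = l := by decide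

/-! ### Relations in the presented group -/

section PSide

variable {k : ℕ}

lemma relhold {r : FreeGroup (Fin 3)} (hr : r ∈ Prels k) :
    PresentedGroup.mk (Prels k) r = 1 :=
  (QuotientGroup.eq_one_iff r).mpr (Subgroup.subset_normalClosure hr)

variable (k)

lemma h1 : (Px k) ^ 2 = (Px k * Py k) ^ 2 := by
  have h := relhold (k := k) (Set.mem_insert _ _)
  rw [map_mul, map_pow, map_inv, map_pow, map_mul, mul_inv_eq_one] at h
  exact h

lemma h2 : (Px k * Py k) ^ 2 = (Py k) ^ 2 := by
  have h := relhold (k := k) (Set.mem_insert_of_mem _ (Set.mem_insert _ _))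
  rw [map_mul, map_pow, map_inv, map_pow, map_mul, mul_inv_eq_one] at h
  exact h

lemma h3 : Pz k * Px k * (Pz k)⁻¹ = Py k := by
  have h := relhold (k := k)
    (Set.mem_insert_of_mem _ (Set.mem_insert_of_mem _ (Set.mem_insert _ _)))
  rw [map_mul, map_mul, map_mul, map_inv, map_inv, mul_inv_eq_one] at h
  exact h

lemma h4 : Pz k * Py k * (Pz k)⁻¹ = Px k * Py k := by
  have h := relhold (k := k)
    (Set.mem_insert_of_mem _ (Set.mem_insert_of_mem _ (Set.mem_insert_of_mem _
      (Set.mem_insert _ _))))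
  rw [map_mul, map_mul, map_mul, map_inv, map_inv, map_mul, mul_inv_eq_one] at h
  exact h

lemma h5 : (Pz k) ^ (3 ^ k) = 1 := by
  have h := relhold (k := k)
    (Set.mem_insert_of_mem _ (Set.mem_insert_of_mem _ (Set.mem_insert_of_mem _
      (Set.mem_insert_of_mem _ rfl))))
  rw [map_pow] at h
  exact h

lemma hxyx : Px k * Py k * Px k = Py k := by
  have h := h2 k
  rw [pow_two, pow_two, ← mul_assoc] at h
  exact mul_right_cancel h

lemma hYX : Py k * Px k = (Px k)⁻¹ * Py k := by
  have h := hxyx k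
  calc Py k * Px k = (Px k)⁻¹ * (Px k * Py k * Px k) := by group
  _ = (Px k)⁻¹ * Py k := by rw [h]

lemma hy2 : (Py k) ^ 2 = (Px k) ^ 2 := ((h1 k).trans (h2 k)).symm

lemma hx4 : (Px k) ^ 4 = 1 := by
  have e1 : Py k * (Px k) ^ 2 = (Px k)⁻¹ * (Px k)⁻¹ * Py k := by
    calc Py k * (Px k) ^ 2 = (Py k * Px k) * Px k := by rw [pow_two, ← mul_assoc]
    _ = ((Px k)⁻¹ * Py k) * Px k := by rw [hYX k]
    _ = (Px k)⁻¹ * (Py k * Px k) := by group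
    _ = (Px k)⁻¹ * ((Px k)⁻¹ * Py k) := by rw [hYX k]
    _ = (Px k)⁻¹ * (Px k)⁻¹ * Py k := by group
  have e2 : Py k * (Px k) ^ 2 = (Px k) ^ 2 * Py k := by
    calc Py k * (Px k) ^ 2 = Py k * (Py k) ^ 2 := by rw [hy2 k]
    _ = (Py k) ^ 2 * Py k := by group
    _ = (Px k) ^ 2 * Py k := by rw [hy2 k]
  have e4 : (Px k)⁻¹ * (Px k)⁻¹ = (Px k) ^ 2 := mul_right_cancel (e1.symm.trans e2)
  calc (Px k) ^ 4 = (Px k) ^ 2 * (Px k) ^ 2 := by group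
  _ = (Px k) ^ 2 * ((Px k)⁻¹ * (Px k)⁻¹) := by rw [e4]
  _ = 1 := by group

lemma hXinv : (Px k)⁻¹ = (Px k) ^ 3 :=
  inv_eq_of_mul_eq_one_right (by rw [← pow_succ']; exact hx4 k)

lemma hy4 : (Py k) ^ 4 = 1 := by
  calc (Py k) ^ 4 = ((Py k) ^ 2) ^ 2 := by group
  _ = ((Px k) ^ 2) ^ 2 := by rw [hy2 k]
  _ = (Px k) ^ 4 := by group
  _ = 1 := hx4 k

lemma hYinv : (Py k)⁻¹ = (Py k) ^ 3 :=
  inv_eq_of_mul_eq_one_right (by rw [← pow_succ']; exact hy4 k)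

lemma hXY : Px k * Py k = Py k * (Px k) ^ 3 := by
  calc Px k * Py k = Px k * (Py k * Px k) * (Px k)⁻¹ := by group
  _ = Px k * ((Px k)⁻¹ * Py k) * (Px k)⁻¹ := by rw [hYX k]
  _ = Py k * (Px k)⁻¹ := by group
  _ = Py k * (Px k) ^ 3 := by rw [hXinv k]

lemma hyxy : Py k * Px k * Py k = Px k := by
  calc Py k * Px k * Py k = ((Px k)⁻¹ * Py k) * Py k := by rw [hYX k]
  _ = (Px k)⁻¹ * (Py k) ^ 2 := by rw [mul_assoc, ← pow_two]
  _ = (Px k)⁻¹ * (Px k) ^ 2 := by rw [hy2 k]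
  _ = Px k := by group

lemma hzx : Pz k * Px k = Py k * Pz k := by
  calc Pz k * Px k = (Pz k * Px k * (Pz k)⁻¹) * Pz k := by group
  _ = Py k * Pz k := by rw [h3 k]

lemma hzy : Pz k * Py k = (Px k * Py k) * Pz k := by
  calc Pz k * Py k = (Pz k * Py k * (Pz k)⁻¹) * Pz k := by group
  _ = (Px k * Py k) * Pz k := by rw [h4 k]

lemma hzxy : Pz k * (Px k * Py k) = Px k * Pz k := by
  calc Pz k * (Px k * Py k) = (Pz k * Px k) * Py k := by group
  _ = (Py k * Pz k) * Py k := by rw [hzx k]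
  _ = Py k * (Pz k * Py k) := by group
  _ = Py k * ((Px k * Py k) * Pz k) := by rw [hzy k]
  _ = (Py k * Px k * Py k) * Pz k := by group
  _ = Px k * Pz k := by rw [hyxy k]

/-- Normal form for the `Q8`-part inside the presented group. -/
noncomputable def w : Q8 → PGroup k
  | .a i => (Px k) ^ i.val
  | .xa i => Py k * (Px k) ^ i.val

lemma w_one : w k 1 = 1 := pow_zero _

lemma Xpow_val_add (i j : ZMod (2 * 2)) :
    (Px k) ^ i.val * (Px k) ^ j.val = (Px k) ^ ((i + j).val) := by
  rw [← pow_add, pow_eq_pow_mod _ (hx4 k), ZMod.val_add]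

lemma XpowY : ∀ n : ℕ, (Px k) ^ n * Py k = Py k * (Px k) ^ (3 * n)
  | 0 => by simp
  | n + 1 => by
    rw [pow_succ, mul_assoc, hXY k, ← mul_assoc, XpowY n, mul_assoc, ← pow_add,
      Nat.mul_succ]

lemma wX : ∀ q : Q8, w k q * Px k = w k (q * .a 1)
  | .a i => by
    show (Px k) ^ i.val * Px k = (Px k) ^ ((i + 1).val)
    have h := Xpow_val_add k i 1
    rw [show ((1 : ZMod (2 * 2)).val) = 1 from rfl, pow_one] at h
    exact h
  | .xa i => by
    show Py k * (Px k) ^ i.val * Px k = Py k * (Px k) ^ ((i + 1).val)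
    have h := Xpow_val_add k i 1
    rw [show ((1 : ZMod (2 * 2)).val) = 1 from rfl, pow_one] at h
    rw [mul_assoc, h]

lemma wY : ∀ q : Q8, w k q * Py k = w k (q * .xa 0)
  | .a i => by
    show (Px k) ^ i.val * Py k = Py k * (Px k) ^ ((0 - i).val)
    have hm : (3 * i.val) % 4 = ((0 - i : ZMod (2 * 2))).val := by revert i; decide
    rw [XpowY k i.val, pow_eq_pow_mod _ (hx4 k), hm]
  | .xa i => by
    show Py k * (Px k) ^ i.val * Py k = (Px k) ^ (((2 : ℕ) + 0 - i : ZMod (2 * 2)).val)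
    have hm : (2 + 3 * i.val) % 4 = (((2 : ℕ) + 0 - i : ZMod (2 * 2))).val := by
      revert i; decide
    have h2 : Py k * Py k = (Px k) ^ 2 := by rw [← pow_two, hy2 k]
    rw [mul_assoc, XpowY k i.val, ← mul_assoc, h2, ← pow_add,
      pow_eq_pow_mod _ (hx4 k), hm]

lemma wXY (q : Q8) : w k q * (Px k * Py k) = w k (q * .a 1 * .xa 0) := by
  rw [← mul_assoc, wX, wY]

lemma w_a1 : w k (.a 1) = Px k := pow_one _

lemma w_xa0 : w k (.xa 0) = Py k := by
  show Py k * (Px k) ^ ((0 : ZMod (2 * 2)).val) = Py k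
  rw [show ((0 : ZMod (2 * 2)).val) = 0 from rfl, pow_zero, mul_one]

lemma w_xa3 : w k (.xa 3) = Px k * Py k := by
  show Py k * (Px k) ^ ((3 : ZMod (2 * 2)).val) = Px k * Py k
  rw [show ((3 : ZMod (2 * 2)).val) = 3 from rfl, hXY k]

/-- `w` is multiplicative when the second factor is one of the three key elements. -/
lemma wmul3 (q p : Q8) (hp : p = .a 1 ∨ p = .xa 0 ∨ p = .xa 3) :
    w k q * w k p = w k (q * p) := by
  rcases hp with rfl | rfl | rfl
  · rw [w_a1]; exact wX k q
  · rw [w_xa0]; exact wY k q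
  · rw [w_xa3, wXY k q, mul_assoc,
      show (QuaternionGroup.a 1 * .xa 0 : Q8) = .xa 3 by decide]

/-- Conjugation data for powers of `z`. -/
def e1 (n : ℕ) : Q8 := if n % 3 = 0 then .a 1 else if n % 3 = 1 then .xa 0 else .xa 3
def e2 (n : ℕ) : Q8 := if n % 3 = 0 then .xa 0 else if n % 3 = 1 then .xa 3 else .a 1
def e3 (n : ℕ) : Q8 := if n % 3 = 0 then .xa 3 else if n % 3 = 1 then .a 1 else .xa 0

lemma e1_mem (n : ℕ) : e1 n = .a 1 ∨ e1 n = .xa 0 ∨ e1 n = .xa 3 := by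
  unfold e1; split_ifs <;> simp
lemma e2_mem (n : ℕ) : e2 n = .a 1 ∨ e2 n = .xa 0 ∨ e2 n = .xa 3 := by
  unfold e2; split_ifs <;> simp
lemma e1_succ (n : ℕ) : e1 (n + 1) = e2 n := by
  rcases (by omega : n % 3 = 0 ∨ n % 3 = 1 ∨ n % 3 = 2) with h | h | h <;>
    simp [e1, e2, Nat.add_mod, h]
lemma e2_succ (n : ℕ) : e2 (n + 1) = e3 n := by
  rcases (by omega : n % 3 = 0 ∨ n % 3 = 1 ∨ n % 3 = 2) with h | h | h <;>
    simp [e2, e3, Nat.add_mod, h]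
lemma e3_succ (n : ℕ) : e3 (n + 1) = e1 n := by
  rcases (by omega : n % 3 = 0 ∨ n % 3 = 1 ∨ n % 3 = 2) with h | h | h <;>
    simp [e3, e1, Nat.add_mod, h]

lemma czw : ∀ n : ℕ,
    ((Pz k) ^ n * Px k = w k (e1 n) * (Pz k) ^ n) ∧
    ((Pz k) ^ n * Py k = w k (e2 n) * (Pz k) ^ n) ∧
    ((Pz k) ^ n * (Px k * Py k) = w k (e3 n) * (Pz k) ^ n)
  | 0 => by
    refine ⟨?_, ?_, ?_⟩ <;>
      simp [e1, e2, e3, w_a1, w_xa0, w_xa3]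
  | n + 1 => by
    obtain ⟨ih1, ih2, ih3⟩ := czw n
    refine ⟨?_, ?_, ?_⟩
    · rw [pow_succ, mul_assoc, hzx k, ← mul_assoc, ih2, e1_succ, mul_assoc]
    · rw [pow_succ, mul_assoc, hzy k, ← mul_assoc, ih3, e2_succ, mul_assoc]
    · rw [pow_succ, mul_assoc, hzxy k, ← mul_assoc, ih1, e3_succ, mul_assoc]

/-- The normal-form parametrization of the presented group. -/
noncomputable def F : Q8 × ZMod (3 ^ k) → PGroup k :=
  fun v => w k v.1 * (Pz k) ^ (v.2.val)

lemma neZeroN : NeZero (3 ^ k) := ⟨pow_ne_zero _ (by norm_num)⟩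

lemma zval_mul (hk : 2 ≤ k) (c : ZMod (3 ^ k)) :
    (Pz k) ^ (c.val) * Pz k = (Pz k) ^ ((c + 1).val) := by
  haveI := neZeroN k
  haveI : Fact (1 < 3 ^ k) := ⟨by calc 1 < 3 ^ 2 := by norm_num
                                  _ ≤ 3 ^ k := Nat.pow_le_pow_right (by norm_num) hk⟩
  rw [← pow_succ, pow_eq_pow_mod _ (h5 k), ZMod.val_add, ZMod.val_one]

lemma FclX (v : Q8 × ZMod (3 ^ k)) : ∃ v', F k v' = F k v * Px k := by
  obtain ⟨q, c⟩ := v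
  refine ⟨(q * e1 c.val, c), ?_⟩
  show w k (q * e1 c.val) * (Pz k) ^ c.val = w k q * (Pz k) ^ c.val * Px k
  rw [mul_assoc, (czw k c.val).1, ← mul_assoc, wmul3 k q _ (e1_mem c.val)]

lemma FclY (v : Q8 × ZMod (3 ^ k)) : ∃ v', F k v' = F k v * Py k := by
  obtain ⟨q, c⟩ := v
  refine ⟨(q * e2 c.val, c), ?_⟩
  show w k (q * e2 c.val) * (Pz k) ^ c.val = w k q * (Pz k) ^ c.val * Py k
  rw [mul_assoc, (czw k c.val).2.1, ← mul_assoc, wmul3 k q _ (e2_mem c.val)]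

lemma FclZ (hk : 2 ≤ k) (v : Q8 × ZMod (3 ^ k)) : ∃ v', F k v' = F k v * Pz k := by
  obtain ⟨q, c⟩ := v
  refine ⟨(q, c + 1), ?_⟩
  show w k q * (Pz k) ^ (c + 1).val = w k q * (Pz k) ^ c.val * Pz k
  rw [mul_assoc, zval_mul k hk c]

lemma FclXpow : ∀ (j : ℕ) (v : Q8 × ZMod (3 ^ k)), ∃ v', F k v' = F k v * (Px k) ^ j
  | 0, v => ⟨v, by rw [pow_zero, mul_one]⟩
  | j + 1, v => by
    obtain ⟨v1, h1⟩ := FclXpow j v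
    obtain ⟨v2, h2⟩ := FclX k v1
    exact ⟨v2, by rw [h2, h1, pow_succ, mul_assoc]⟩

lemma FclYpow : ∀ (j : ℕ) (v : Q8 × ZMod (3 ^ k)), ∃ v', F k v' = F k v * (Py k) ^ j
  | 0, v => ⟨v, by rw [pow_zero, mul_one]⟩
  | j + 1, v => by
    obtain ⟨v1, h1⟩ := FclYpow j v
    obtain ⟨v2, h2⟩ := FclY k v1
    exact ⟨v2, by rw [h2, h1, pow_succ, mul_assoc]⟩

lemma FclZpow (hk : 2 ≤ k) : ∀ (j : ℕ) (v : Q8 × ZMod (3 ^ k)), ∃ v', F k v' = F k v * (Pz k) ^ j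
  | 0, v => ⟨v, by rw [pow_zero, mul_one]⟩
  | j + 1, v => by
    obtain ⟨v1, h1⟩ := FclZpow hk j v
    obtain ⟨v2, h2⟩ := FclZ k hk v1
    exact ⟨v2, by rw [h2, h1, pow_succ, mul_assoc]⟩

lemma hZinv : (Pz k)⁻¹ = (Pz k) ^ (3 ^ k - 1) := by
  refine inv_eq_of_mul_eq_one_right ?_
  rw [← pow_succ', show 3 ^ k - 1 + 1 = 3 ^ k by
    have : 0 < 3 ^ k := pow_pos (by norm_num) k
    omega]
  exact h5 k

lemma surjF (hk : 2 ≤ k) : Function.Surjective (F k) := by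
  intro g
  have hg : g ∈ Subgroup.closure (Set.range (PresentedGroup.of (rels := Prels k))) := by
    rw [PresentedGroup.closure_range_of]; exact Subgroup.mem_top g
  haveI := neZeroN k
  refine Subgroup.closure_induction_right (p := fun x _ => ∃ v, F k v = x) ?_ ?_ ?_ hg
  · exact ⟨(1, 0), by
      show w k 1 * (Pz k) ^ ((0 : ZMod (3 ^ k)).val) = 1
      rw [w_one, ZMod.val_zero, pow_zero, one_mul]⟩
  · rintro x _ y ⟨t, rfl⟩ ⟨v, rfl⟩
    fin_cases t
    · exact FclX k v
    · exact FclY k v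
    · exact FclZ k hk v
  · rintro x _ y ⟨t, rfl⟩ ⟨v, rfl⟩
    fin_cases t
    · obtain ⟨v', hv'⟩ := FclXpow k 3 v
      exact ⟨v', by rw [hv', ← hXinv k]; rfl⟩
    · obtain ⟨v', hv'⟩ := FclYpow k 3 v
      exact ⟨v', by rw [hv', ← hYinv k]; rfl⟩
    · obtain ⟨v', hv'⟩ := FclZpow k hk (3 ^ k - 1) v
      exact ⟨v', by rw [hv', ← hZinv k]; rfl⟩

/-! ### The homomorphism to the model group -/

/-- Images of the generators. -/
def fgen (m : ℕ) : Fin 3 → Md m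
  | 0 => Md.iota (.a 1)
  | 1 => Md.iota (.xa 0)
  | 2 => Md.zeta

lemma hrels {m : ℕ} (hm : 3 * m = 3 ^ k) :
    ∀ r ∈ Prels k, FreeGroup.lift (fgen m) r = 1 := by
  intro r hr
  simp only [Prels, Set.mem_insert_iff, Set.mem_singleton_iff] at hr
  rcases hr with rfl | rfl | rfl | rfl | rfl
  · rw [map_mul, map_pow, map_inv, map_pow, map_mul]
    simp only [FreeGroup.lift_apply_of]
    show (Md.iota (.a 1)) ^ 2 * ((Md.iota (.a 1) * Md.iota (.xa 0)) ^ 2)⁻¹ = 1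
    rw [← map_mul, ← map_pow, ← map_pow, ← map_inv, ← map_mul, ← map_one (Md.iota (m := m))]
    congr 1
  · rw [map_mul, map_pow, map_inv, map_pow, map_mul]
    simp only [FreeGroup.lift_apply_of]
    show (Md.iota (.a 1) * Md.iota (.xa 0)) ^ 2 * ((Md.iota (.xa 0)) ^ 2)⁻¹ = 1
    rw [← map_mul, ← map_pow, ← map_pow, ← map_inv, ← map_mul, ← map_one (Md.iota (m := m))]
    congr 1
  · rw [map_mul, map_mul, map_mul, map_inv, map_inv]
    simp only [FreeGroup.lift_apply_of]
    show Md.zeta * Md.iota (.a 1) * Md.zeta⁻¹ * (Md.iota (.xa 0))⁻¹ = 1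
    rw [Md.zeta_conj, ← map_inv, ← map_mul, ← map_one (Md.iota (m := m))]
    congr 1
  · rw [map_mul, map_mul, map_mul, map_inv, map_inv, map_mul]
    simp only [FreeGroup.lift_apply_of]
    show Md.zeta * Md.iota (.xa 0) * Md.zeta⁻¹ * (Md.iota (.a 1) * Md.iota (.xa 0))⁻¹ = 1
    rw [Md.zeta_conj, ← map_mul, ← map_inv, ← map_mul, ← map_one (Md.iota (m := m))]
    congr 1
  · rw [map_pow]
    simp only [FreeGroup.lift_apply_of]
    show (Md.zeta : Md m) ^ (3 ^ k) = 1
    rw [Md.zeta_pow, ← hm, ZMod.natCast_self]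
    rfl

/-- The homomorphism from the presented group to the model group. -/
noncomputable def phi {m : ℕ} (hm : 3 * m = 3 ^ k) : PGroup k →* Md m :=
  PresentedGroup.toGroup (hrels k hm)

lemma phi_X {m : ℕ} (hm : 3 * m = 3 ^ k) : phi k hm (Px k) = Md.iota (.a 1) :=
  PresentedGroup.toGroup.of _
lemma phi_Y {m : ℕ} (hm : 3 * m = 3 ^ k) : phi k hm (Py k) = Md.iota (.xa 0) :=
  PresentedGroup.toGroup.of _
lemma phi_Z {m : ℕ} (hm : 3 * m = 3 ^ k) : phi k hm (Pz k) = Md.zeta :=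
  PresentedGroup.toGroup.of _

lemma phi_w {m : ℕ} (hm : 3 * m = 3 ^ k) (q : Q8) : phi k hm (w k q) = Md.iota q := by
  haveI : NeZero (2 * 2) := ⟨by norm_num⟩
  cases q with
  | a i =>
    show phi k hm ((Px k) ^ i.val) = _
    rw [map_pow, phi_X, ← map_pow, QuaternionGroup.a_one_pow]
    congr 1
    exact congrArg _ (ZMod.natCast_rightInverse i)
  | xa i =>
    show phi k hm (Py k * (Px k) ^ i.val) = _
    rw [map_mul, map_pow, phi_X, phi_Y, ← map_pow, ← map_mul, QuaternionGroup.a_one_pow]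
    congr 1
    rw [QuaternionGroup.xa_mul_a, zero_add]
    exact congrArg _ (ZMod.natCast_rightInverse i)

lemma surj_phi {m : ℕ} (hm : 3 * m = 3 ^ k) (hm0 : m ≠ 0) :
    Function.Surjective (phi k hm) := by
  haveI : NeZero (3 * m) := ⟨by omega⟩
  rintro ⟨q, t⟩
  refine ⟨w k q * (Pz k) ^ (t.val), ?_⟩
  rw [map_mul, phi_w, map_pow, phi_Z, Md.zeta_pow, Md.iota_apply]
  show (q * act (Md.r 0) 1, 0 + (t.val : ZMod (3 * m))) = (q, t)
  rw [map_zero, act_zero, mul_one, zero_add, ZMod.natCast_rightInverse t]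

end PSide

/-! ### Conjugacy classes of the model group -/

namespace Md

variable {m : ℕ}

lemma conj_eq (c g : Md m) :
    c * g * c⁻¹ = (c.1 * act (r c.2) g.1 * act (r g.2) c.1⁻¹, g.2) := by
  rw [mul_def, mul_def, inv_def]
  simp only
  refine Prod.ext ?_ ?_ <;> dsimp only
  · rw [map_add, ← act_add]
    have h : r c.2 + r g.2 + -r c.2 = r g.2 := by ring
    rw [h]
  · ring

lemma isConjM (g h : Md m) : IsConj g h ↔
    (g.2 = h.2 ∧ ∃ (p : Q8) (u : ZMod 3), h.1 = p * act u g.1 * act (r g.2) p⁻¹) := by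
  constructor
  · intro hc
    obtain ⟨c, hc⟩ := isConj_iff.mp hc
    rw [conj_eq] at hc
    replace hc := Prod.ext_iff.mp hc
    exact ⟨hc.2.symm ▸ rfl, c.1, r c.2, hc.1.symm⟩
  · rintro ⟨h2, p, u, hp⟩
    refine isConj_iff.mpr ⟨(p, ((u.val : ℕ) : ZMod (3 * m))), ?_⟩
    refine (conj_eq (m := m) (p, ((u.val : ℕ) : ZMod (3 * m))) g).trans ?_
    have hr : r (((u.val : ℕ) : ZMod (3 * m))) = u := by
      rw [map_natCast]
      exact ZMod.natCast_rightInverse u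
    exact Prod.ext (by dsimp only; rw [hr, ← hp]) h2

/-- The label type: classes with label `0`, `1` exist for every second component `t`,
and label `2` only when `t ≡ 0 mod 3`. -/
def T (m : ℕ) : Type := (ZMod (3 * m) × Fin 2) ⊕ {t : ZMod (3 * m) // (r t : ZMod 3) = 0}

/-- The class invariant, as a function of the second component and the label. -/
def aux (t : ZMod (3 * m)) (l : Fin 3) : T m :=
  if l = 2 then
    (if h0 : r t = 0 then Sum.inr ⟨t, h0⟩ else Sum.inl (t, 0))
  else Sum.inl (t, ⟨l.val % 2, Nat.mod_lt _ (by norm_num)⟩)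

/-- The class invariant. -/
def fT (g : Md m) : T m := aux g.2 (label (r g.2) g.1)

lemma fT_conj {g h : Md m} (hc : IsConj g h) : fT g = fT h := by
  obtain ⟨h2, p, u, hp⟩ := (isConjM g h).mp hc
  unfold fT
  rw [← h2, hp, L1]

/-- The induced map on conjugacy classes. -/
def cT : ConjClasses (Md m) → T m :=
  Quotient.lift fT (fun _ _ h => fT_conj h)

lemma cT_mk (g : Md m) : cT (ConjClasses.mk g) = fT g := rfl

lemma label_ne_two {t : ZMod (3 * m)} {q : Q8} (h : r t ≠ 0) : label (r t) q ≠ 2 :=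
  fun hl => h (L3 _ _ hl)

lemma inj_cT : Function.Injective (cT (m := m)) := by
  intro a b
  induction a using Quotient.ind
  induction b using Quotient.ind
  rename_i g h
  intro heq
  obtain ⟨q, t⟩ := g
  obtain ⟨q', t'⟩ := h
  change fT (q, t) = fT (q', t') at heq
  unfold fT aux T at heq
  simp only at heq
  have key : t = t' ∧ label (r t) q = label (r t') q' := by
    by_cases h1 : label (r t) q = 2 <;> by_cases h2 : label (r t') q' = 2
    · rw [if_pos h1, if_pos h2] at heq
      by_cases g1 : r t = 0 <;> by_cases g2 : r t' = 0
      · rw [dif_pos g1, dif_pos g2] at heq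
        have ht := Subtype.ext_iff.mp (Sum.inr_injective heq)
        exact ⟨ht, by rw [h1, h2]⟩
      · rw [dif_pos g1, dif_neg g2] at heq; exact absurd heq (by simp)
      · rw [dif_neg g1, dif_pos g2] at heq; exact absurd heq (by simp)
      · exact absurd h1 (label_ne_two g1)
    · rw [if_pos h1, if_neg h2] at heq
      by_cases g1 : r t = 0
      · rw [dif_pos g1] at heq; exact absurd heq (by simp)
      · exact absurd h1 (label_ne_two g1)
    · rw [if_neg h1, if_pos h2] at heq
      by_cases g2 : r t' = 0
      · rw [dif_pos g2] at heq; exact absurd heq (by simp)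
      · exact absurd h2 (label_ne_two g2)
    · rw [if_neg h1, if_neg h2] at heq
      have hp := Sum.inl_injective heq
      rw [Prod.ext_iff] at hp
      obtain ⟨ht, hl⟩ := hp
      dsimp only at ht hl
      refine ⟨ht, ?_⟩
      have l1 := (label (r t) q).isLt
      have l2 := (label (r t') q').isLt
      have h1' : (label (r t) q).val ≠ 2 := fun hh => h1 (Fin.ext hh)
      have h2' : (label (r t') q').val ≠ 2 := fun hh => h2 (Fin.ext hh)
      have hv := congrArg Fin.val hl
      dsimp only at hv
      rw [← ht] at hv h2' l2
      rw [← ht]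
      exact Fin.ext (by omega)
  obtain ⟨ht, hl⟩ := key
  subst ht
  apply Quotient.sound
  show IsConj _ _
  refine (isConjM (m := m) (q, t) (q', t)).mpr ?_
  exact ⟨rfl, L2 _ _ _ hl⟩

lemma surj_cT : Function.Surjective (cT (m := m)) := by
  rintro (⟨t, l⟩ | ⟨t, h0⟩)
  · obtain ⟨q, hq⟩ := L4 (r t) ⟨l.val, by omega⟩ (Or.inl (by
      intro hh
      have := congrArg Fin.val hh
      simp only at this
      omega))
    refine ⟨ConjClasses.mk (q, t), ?_⟩
    show fT (q, t) = _
    unfold fT aux T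
    simp only
    rw [hq]
    rw [if_neg (by
      intro hh
      have := congrArg Fin.val hh
      simp only at this
      omega)]
    congr 1
    rw [Prod.ext_iff]
    refine ⟨rfl, Fin.ext ?_⟩
    simp only
    omega
  · obtain ⟨q, hq⟩ := L4 (r t) 2 (Or.inr h0)
    refine ⟨ConjClasses.mk (q, t), ?_⟩
    show fT (q, t) = _
    unfold fT aux T
    simp only
    rw [hq, if_pos rfl, dif_pos h0]

lemma card_T (hm0 : m ≠ 0) : Nat.card (T m) = 7 * m := by
  haveI : NeZero (3 * m) := ⟨by omega⟩
  have kE : Fin m ≃ {t : ZMod (3 * m) // (r t : ZMod 3) = 0} := by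
    refine Equiv.ofBijective (fun x => ⟨((3 * x.val : ℕ) : ZMod (3 * m)), ?_⟩) ⟨?_, ?_⟩
    · rw [map_natCast, Nat.cast_mul, ZMod.natCast_self, zero_mul]
    · intro x y hxy
      have hx : ((3 * x.val : ℕ) : ZMod (3 * m)).val = 3 * x.val :=
        ZMod.val_cast_of_lt (by omega)
      have hy : ((3 * y.val : ℕ) : ZMod (3 * m)).val = 3 * y.val :=
        ZMod.val_cast_of_lt (by omega)
      have := Subtype.ext_iff.mp hxy
      have := congrArg ZMod.val this
      rw [hx, hy] at this
      exact Fin.ext (by omega)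
    · rintro ⟨t, ht⟩
      have hrt : Md.r t = ((t.val : ℕ) : ZMod 3) := by
        rw [Md.r, ZMod.castHom_apply, ← ZMod.natCast_val]
      rw [hrt] at ht
      have hdvd : 3 ∣ t.val := (ZMod.natCast_eq_zero_iff t.val 3).mp ht
      obtain ⟨j, hj⟩ := hdvd
      have hjm : j < m := by
        have := t.val_lt
        omega
      refine ⟨⟨j, hjm⟩, ?_⟩
      apply Subtype.ext
      show ((3 * j : ℕ) : ZMod (3 * m)) = t
      rw [← hj]
      exact ZMod.natCast_rightInverse t
  have h1 : Nat.card (T m) =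
      Nat.card (ZMod (3 * m) × Fin 2) + Nat.card {t : ZMod (3 * m) // (r t : ZMod 3) = 0} :=
    Nat.card_sum
  rw [h1, Nat.card_prod, ← Nat.card_congr kE]
  simp only [Nat.card_eq_fintype_card, ZMod.card, Fintype.card_fin]
  ring

end Md

/-- Conjugacy classes transfer along a multiplicative equivalence. -/
def conjEquiv {G H : Type*} [Group G] [Group H] (e : G ≃* H) :
    ConjClasses G ≃ ConjClasses H :=
  Quotient.congr e.toEquiv (by
    intro a b
    show IsConj a b ↔ IsConj (e a) (e b)
    constructor
    · intro hab
      obtain ⟨c, hc⟩ := isConj_iff.mp hab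
      exact isConj_iff.mpr ⟨e c, by rw [← map_inv, ← map_mul, ← map_mul, hc]⟩
    · intro hab
      obtain ⟨d, hd⟩ := isConj_iff.mp hab
      refine isConj_iff.mpr ⟨e.symm d, e.injective ?_⟩
      rw [map_mul, map_mul, map_inv, MulEquiv.apply_symm_apply, hd])

theorem card_and_conjClasses_PGroup (k : ℕ) (hk : 2 ≤ k) :
    Finite (PGroup k) ∧
    Nat.card (PGroup k) = 8 * 3 ^ k ∧
    Nat.card (ConjClasses (PGroup k)) = 7 * 3 ^ (k - 1) := by
  set m : ℕ := 3 ^ (k - 1) with hmdef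
  have hm0 : m ≠ 0 := pow_ne_zero _ (by norm_num)
  have hm : 3 * m = 3 ^ k := by
    rw [hmdef, ← pow_succ']
    congr 1
    omega
  haveI : NeZero (3 ^ k) := neZeroN k
  haveI : NeZero (3 * m) := ⟨by omega⟩
  -- finiteness
  haveI hfin : Finite (PGroup k) := Finite.of_surjective (F k) (surjF k hk)
  -- cardinalities
  have cardDom : Nat.card (Q8 × ZMod (3 ^ k)) = 8 * 3 ^ k := by
    rw [Nat.card_prod, Nat.card_eq_fintype_card, Nat.card_eq_fintype_card,
      QuaternionGroup.card, ZMod.card]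
  have hle : Nat.card (PGroup k) ≤ 8 * 3 ^ k := by
    rw [← cardDom]
    exact Nat.card_le_card_of_surjective (F k) (surjF k hk)
  have hge : 8 * 3 ^ k ≤ Nat.card (PGroup k) := by
    have := Nat.card_le_card_of_surjective (phi k hm) (surj_phi k hm hm0)
    rw [Md.card_Md hm0, hm] at this
    exact this
  have hcard : Nat.card (PGroup k) = 8 * 3 ^ k := le_antisymm hle hge
  -- the isomorphism
  have hbij : Function.Bijective (phi k hm) := by
    rw [Nat.bijective_iff_surjective_and_card]
    exact ⟨surj_phi k hm hm0, by rw [hcard, Md.card_Md hm0, hm]⟩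
  have e : PGroup k ≃* Md m := MulEquiv.ofBijective _ hbij
  refine ⟨hfin, hcard, ?_⟩
  have e2 : ConjClasses (PGroup k) ≃ Md.T m :=
    (conjEquiv e).trans (Equiv.ofBijective _ ⟨Md.inj_cT, Md.surj_cT⟩)
  rw [Nat.card_congr e2, Md.card_T hm0]
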